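/- arXiv:2009.05518 — 5 statements merged into one kernel-verified Lean document; each statement's English description precedes it below -/
import Mathlib

section
/- With α_p(π,ε) the principal's worst-case expected utility over agent responses that are ε-approximately optimal, for any ε, ε' > 0 one has α_p(π, ε+ε') ≥ α_p(π,ε) − ε'/ε. Dually, with β_p(π,ε) the best-case utility (supremum over the same set), β_p(π, ε+ε') ≤ β_p(π,ε) + ε'/ε. -/
open Finset

/-!
Mixing an `(ε + ε')`-approximate best response with weight `t = ε' / (ε + ε')` on an exact best
response yields an `ε`-approximate best response, because regret is affine in the mixed response.
The principal's expected utility moves by at most `t ≤ ε' / ε`, as it takes values in `[0, 1]`.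
So every value attainable at slack `ε + ε'` is within `ε' / ε` of one attainable at slack `ε`,
which transfers to the infimum and the supremum.
-/

section SetOfReals

variable {A B : Set ℝ} {δ : ℝ}

theorem csInf_sub_le_csInf_of_forall_exists_le (hA : A.Nonempty) (hB : BddBelow B)
    (h : ∀ a ∈ A, ∃ b ∈ B, b ≤ a + δ) : sInf B - δ ≤ sInf A :=
  le_csInf hA fun a ha => by
    obtain ⟨b, hb, hba⟩ := h a ha
    linarith [csInf_le hB hb]

theorem csSup_le_csSup_add_of_forall_exists_le (hA : A.Nonempty) (hB : BddAbove B)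
    (h : ∀ a ∈ A, ∃ b ∈ B, a ≤ b + δ) : sSup A ≤ sSup B + δ :=
  csSup_le hA fun a ha => by
    obtain ⟨b, hb, hab⟩ := h a ha
    linarith [le_csSup hB hb]

end SetOfReals

section ApproxBestResponse

variable {E ι : Type*} [AddCommGroup E] [Module ℝ E]

/-- The principal's utilities `g x` over the responses `x ∈ K` whose regret `a i - f x` against
each benchmark `a i` is at most `e`. -/
def approxBestResponseValues (K : Set E) (a : ι → ℝ) (f g : E →ₗ[ℝ] ℝ) (e : ℝ) : Set ℝ :=
  {v | ∃ x ∈ K, (∀ i, a i - f x ≤ e) ∧ v = g x}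

variable {K : Set E} {a : ι → ℝ} {f g : E →ₗ[ℝ] ℝ} {x₀ : E}

theorem mem_approxBestResponseValues_of_best (hx₀ : x₀ ∈ K) (ha : ∀ i, a i ≤ f x₀) {e : ℝ}
    (he : 0 ≤ e) : g x₀ ∈ approxBestResponseValues K a f g e :=
  ⟨x₀, hx₀, fun i => by linarith [ha i], rfl⟩

theorem approxBestResponseValues_subset_Icc (hg : ∀ x ∈ K, g x ∈ Set.Icc 0 1) (e : ℝ) :
    approxBestResponseValues K a f g e ⊆ Set.Icc 0 1 := by
  rintro v ⟨x, hx, -, rfl⟩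
  exact hg x hx

theorem exists_mem_approxBestResponseValues_abs_sub_le (hK : Convex ℝ K) (hx₀ : x₀ ∈ K)
    (ha : ∀ i, a i ≤ f x₀) (hg : ∀ x ∈ K, g x ∈ Set.Icc 0 1) {ε ε' : ℝ} (hε : 0 < ε)
    (hε' : 0 ≤ ε') {v : ℝ} (hv : v ∈ approxBestResponseValues K a f g (ε + ε')) :
    ∃ v' ∈ approxBestResponseValues K a f g ε, |v - v'| ≤ ε' / ε := by
  obtain ⟨x, hx, hregret, rfl⟩ := hv
  set t := ε' / (ε + ε') with ht_def
  have hεε' : 0 < ε + ε' := by linarith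
  have ht0 : 0 ≤ t := div_nonneg hε' hεε'.le
  have ht1 : t ≤ 1 := (div_le_one hεε').2 (by linarith)
  have hmix : (1 - t) * (ε + ε') = ε := by
    rw [ht_def, sub_mul, div_mul_cancel₀ _ hεε'.ne']
    ring
  have hmap (h : E →ₗ[ℝ] ℝ) : h ((1 - t) • x + t • x₀) = (1 - t) * h x + t * h x₀ := by
    simp only [map_add, map_smul, smul_eq_mul]
  refine ⟨g ((1 - t) • x + t • x₀),
    ⟨_, hK hx hx₀ (by linarith) ht0 (by ring), fun i => ?_, rfl⟩, ?_⟩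
  · calc a i - f ((1 - t) • x + t • x₀) = (1 - t) * (a i - f x) + t * (a i - f x₀) := by
          rw [hmap]; ring
      _ ≤ (1 - t) * (ε + ε') + t * 0 := by
          gcongr
          exacts [hregret i, sub_nonpos.2 (ha i)]
      _ = ε := by rw [hmix, mul_zero, add_zero]
  · have hgap : |g x - g x₀| ≤ 1 :=
      abs_sub_le_of_nonneg_of_le (hg x hx).1 (hg x hx).2 (hg x₀ hx₀).1 (hg x₀ hx₀).2
    have ht_le : t ≤ ε' / ε := div_le_div_of_nonneg_left hε' hε (by linarith)
    calc |g x - g ((1 - t) • x + t • x₀)| = t * |g x - g x₀| := by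
          rw [hmap, show g x - ((1 - t) * g x + t * g x₀) = t * (g x - g x₀) by ring,
            abs_mul, abs_of_nonneg ht0]
      _ ≤ t * 1 := by gcongr
      _ ≤ ε' / ε := by rwa [mul_one]

theorem sInf_approxBestResponseValues_add_ge (hK : Convex ℝ K) (hx₀ : x₀ ∈ K)
    (ha : ∀ i, a i ≤ f x₀) (hg : ∀ x ∈ K, g x ∈ Set.Icc 0 1) {ε ε' : ℝ} (hε : 0 < ε)
    (hε' : 0 ≤ ε') :
    sInf (approxBestResponseValues K a f g ε) - ε' / ε ≤
      sInf (approxBestResponseValues K a f g (ε + ε')) :=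
  csInf_sub_le_csInf_of_forall_exists_le
    ⟨_, mem_approxBestResponseValues_of_best hx₀ ha (by linarith)⟩
    (bddBelow_Icc.mono (approxBestResponseValues_subset_Icc hg ε)) fun _ hv => by
      obtain ⟨v', hv', hvv'⟩ :=
        exists_mem_approxBestResponseValues_abs_sub_le hK hx₀ ha hg hε hε' hv
      exact ⟨v', hv', by linarith [(abs_le.1 hvv').1]⟩

theorem sSup_approxBestResponseValues_add_le (hK : Convex ℝ K) (hx₀ : x₀ ∈ K)
    (ha : ∀ i, a i ≤ f x₀) (hg : ∀ x ∈ K, g x ∈ Set.Icc 0 1) {ε ε' : ℝ} (hε : 0 < ε)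
    (hε' : 0 ≤ ε') :
    sSup (approxBestResponseValues K a f g (ε + ε')) ≤
      sSup (approxBestResponseValues K a f g ε) + ε' / ε :=
  csSup_le_csSup_add_of_forall_exists_le
    ⟨_, mem_approxBestResponseValues_of_best hx₀ ha (by linarith)⟩
    (bddAbove_Icc.mono (approxBestResponseValues_subset_Icc hg ε)) fun _ hv => by
      obtain ⟨v', hv', hvv'⟩ :=
        exists_mem_approxBestResponseValues_abs_sub_le hK hx₀ ha hg hε hε' hv
      exact ⟨v', hv', by linarith [(abs_le.1 hvv').2]⟩

end ApproxBestResponse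

section FiniteStates

variable {Y R : Type*} [Fintype Y] [Fintype R]

theorem sum_mul_mem_Icc_of_mem_stdSimplex {w μ : R → ℝ} (hμ : μ ∈ stdSimplex ℝ R)
    (hw : ∀ r, w r ∈ Set.Icc (0 : ℝ) 1) : ∑ r, μ r * w r ∈ Set.Icc (0 : ℝ) 1 :=
  (convex_Icc 0 1).sum_mem (fun r _ => hμ.1 r) hμ.2 fun r _ => hw r

def expectedUtility (π : Y → ℝ) (W : R → Y → ℝ) : (R → ℝ) →ₗ[ℝ] ℝ where
  toFun μ := ∑ y, π y * ∑ r, μ r * W r y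
  map_add' μ ν := by simp only [Pi.add_apply, add_mul, sum_add_distrib, mul_add]
  map_smul' c μ := by simp only [Pi.smul_apply, smul_eq_mul, mul_sum, mul_assoc, mul_left_comm,
    RingHom.id_apply]

variable {π : Y → ℝ} {W : R → Y → ℝ}

theorem expectedUtility_single [DecidableEq R] (r : R) :
    expectedUtility π W (Pi.single r 1) = ∑ y, π y * W r y := by
  simp [expectedUtility, Pi.single_apply]

theorem expectedUtility_mem_Icc (hπ : π ∈ stdSimplex ℝ Y) (hW : ∀ r y, W r y ∈ Set.Icc (0 : ℝ) 1)
    {μ : R → ℝ} (hμ : μ ∈ stdSimplex ℝ R) : expectedUtility π W μ ∈ Set.Icc (0 : ℝ) 1 :=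
  sum_mul_mem_Icc_of_mem_stdSimplex hπ fun y =>
    sum_mul_mem_Icc_of_mem_stdSimplex hμ fun r => hW r y

theorem approxBestResponseValues_stdSimplex (π : Y → ℝ) (U V : R → Y → ℝ) (e : ℝ) :
    approxBestResponseValues (stdSimplex ℝ R) (fun r' => ∑ y, π y * U r' y)
        (expectedUtility π U) (expectedUtility π V) e =
      {v : ℝ | ∃ μ : R → ℝ, (∀ r, 0 ≤ μ r) ∧ (∑ r, μ r = 1) ∧
        (∀ r' : R, (∑ y, π y * U r' y) - (∑ y, π y * ∑ r, μ r * U r y) ≤ e) ∧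
        v = ∑ y, π y * ∑ r, μ r * V r y} := by
  ext v
  simp only [approxBestResponseValues, stdSimplex, Set.mem_ofPred_eq, and_assoc]
  rfl

end FiniteStates

theorem alpha_beta_robustness_general
    {Y R : Type*} [Fintype Y] [Fintype R] [Nonempty R]
    (U V : R → Y → ℝ)
    (hV : ∀ r y, V r y ∈ Set.Icc (0:ℝ) 1)
    (π : Y → ℝ) (hπ0 : ∀ y, 0 ≤ π y) (hπ1 : ∑ y, π y = 1)
    (α β : ℝ → ℝ)
    (hα : ∀ e : ℝ, α e = sInf {v : ℝ | ∃ μ : R → ℝ,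
        (∀ r, 0 ≤ μ r) ∧ (∑ r, μ r = 1) ∧
        (∀ r' : R, (∑ y, π y * U r' y) - (∑ y, π y * ∑ r, μ r * U r y) ≤ e) ∧
        v = ∑ y, π y * ∑ r, μ r * V r y})
    (hβ : ∀ e : ℝ, β e = sSup {v : ℝ | ∃ μ : R → ℝ,
        (∀ r, 0 ≤ μ r) ∧ (∑ r, μ r = 1) ∧
        (∀ r' : R, (∑ y, π y * U r' y) - (∑ y, π y * ∑ r, μ r * U r y) ≤ e) ∧
        v = ∑ y, π y * ∑ r, μ r * V r y})
    (ε ε' : ℝ) (hε : 0 < ε) (hε' : 0 < ε') :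
    α (ε + ε') ≥ α ε - ε' / ε ∧ β (ε + ε') ≤ β ε + ε' / ε := by
  classical
  obtain ⟨r₀, -, hr₀⟩ :=
    exists_max_image univ (fun r => ∑ y, π y * U r y) univ_nonempty
  have hbest : ∀ r', ∑ y, π y * U r' y ≤ expectedUtility π U (Pi.single r₀ 1) := fun r' => by
    simpa only [expectedUtility_single] using hr₀ r' (mem_univ r')
  have hV_mem : ∀ μ ∈ stdSimplex ℝ R, expectedUtility π V μ ∈ Set.Icc 0 1 :=
    fun _ => expectedUtility_mem_Icc ⟨hπ0, hπ1⟩ hV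
  simp only [hα, hβ, ← approxBestResponseValues_stdSimplex]
  exact ⟨sInf_approxBestResponseValues_add_ge (convex_stdSimplex ℝ R)
      (single_mem_stdSimplex ℝ r₀) hbest hV_mem hε hε'.le,
    sSup_approxBestResponseValues_add_le (convex_stdSimplex ℝ R)
      (single_mem_stdSimplex ℝ r₀) hbest hV_mem hε hε'.le⟩

/-- Lemma 1: the principal's worst-case utility degrades smoothly
when the agent's slack increases from `ε` to `ε + ε'`: `α(ε+ε') ≥ α(ε) − ε'/ε`;
dually the best-case utility satisfies `β(ε+ε') ≤ β(ε) + ε'/ε`. -/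
theorem alpha_beta_robustness
    {Y R : Type*} [Fintype Y] [Fintype R] [Nonempty R]
    (U V : R → Y → ℝ)
    (hU : ∀ r y, U r y ∈ Set.Icc (0:ℝ) 1)
    (hV : ∀ r y, V r y ∈ Set.Icc (0:ℝ) 1)
    (π : Y → ℝ) (hπ0 : ∀ y, 0 ≤ π y) (hπ1 : ∑ y, π y = 1)
    (α β : ℝ → ℝ)
    (hα : ∀ e : ℝ, α e = sInf {v : ℝ | ∃ μ : R → ℝ,
        (∀ r, 0 ≤ μ r) ∧ (∑ r, μ r = 1) ∧
        (∀ r' : R, (∑ y, π y * U r' y) - (∑ y, π y * ∑ r, μ r * U r y) ≤ e) ∧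
        v = ∑ y, π y * ∑ r, μ r * V r y})
    (hβ : ∀ e : ℝ, β e = sSup {v : ℝ | ∃ μ : R → ℝ,
        (∀ r, 0 ≤ μ r) ∧ (∑ r, μ r = 1) ∧
        (∀ r' : R, (∑ y, π y * U r' y) - (∑ y, π y * ∑ r, μ r * U r y) ≤ e) ∧
        v = ∑ y, π y * ∑ r, μ r * V r y})
    (ε ε' : ℝ) (hε : 0 < ε) (hε' : 0 < ε') :
    α (ε + ε') ≥ α ε - ε' / ε ∧ β (ε + ε') ≤ β ε + ε' / ε :=
  alpha_beta_robustness_general U V hV π hπ0 hπ1 α β hα hβ ε ε' hε hε'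
end

section
/- Let α_p(π,ε) be the principal's worst-case expected utility when the agent's response is ε-approximately optimal under prior π. Then for any two priors π, π' on a finite set Y, α_p(π,ε) ≥ α_p(π',ε) − 2·d₁(π,π')/ε − d₁(π,π'), where d₁ is the total-variation (ℓ¹) distance between distributions. -/
/-!
Write `d = ∑ y, |π y - π' y|`. Expectations of `[0,1]`-valued functions move by at most `d` when
the prior changes from `π` to `π'`, so every `ε`-optimal response under `π` is `(ε + 2d)`-optimal
under `π'` and its value drops by at most `d`; hence `α(π, ε) ≥ α(π', ε + 2d) - d`. Finally
`α(π', ε + δ) ≥ α(π', ε) - δ / ε`: mixing an `(ε + δ)`-optimal response with an exact best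
response, with weight `δ / (ε + δ)` on the latter, makes it `ε`-optimal and raises its value by
at most that weight.
-/

open Finset Matrix

section

variable {ι : Type*} [Fintype ι]

theorem dotProduct_mem_of_mem_stdSimplex {s : Set ℝ} (hs : Convex ℝ s) {ρ f : ι → ℝ}
    (hρ : ρ ∈ stdSimplex ℝ ι) (hf : ∀ y, f y ∈ s) : ρ ⬝ᵥ f ∈ s :=
  hs.sum_mem (fun y _ => hρ.1 y) hρ.2 fun y _ => hf y

theorem abs_le_one_of_mem_Icc {x : ℝ} (hx : x ∈ Set.Icc 0 1) : |x| ≤ 1 :=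
  (abs_of_nonneg hx.1).trans_le hx.2

theorem abs_dotProduct_sub_dotProduct_le {ρ ρ' f : ι → ℝ} (hf : ∀ y, |f y| ≤ 1) :
    |ρ ⬝ᵥ f - ρ' ⬝ᵥ f| ≤ ∑ y, |ρ y - ρ' y| := by
  rw [← sub_dotProduct]
  refine (abs_sum_le_sum_abs _ _).trans (sum_le_sum fun y _ => ?_)
  rw [Pi.sub_apply, abs_mul]
  exact mul_le_of_le_one_right (abs_nonneg _) (hf y)

end

theorem vecMul_mem_Icc {Y R : Type*} [Fintype R] {W : Matrix R Y ℝ}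
    (hW : ∀ r y, W r y ∈ Set.Icc 0 1) {μ : R → ℝ} (hμ : μ ∈ stdSimplex ℝ R) (y : Y) : (μ ᵥ* W) y ∈ Set.Icc 0 1 :=
  dotProduct_mem_of_mem_stdSimplex (convex_Icc 0 1) hμ fun r => hW r y

section

variable {Y R : Type*} [Fintype Y] [Fintype R]

/-- `B(ρ, e)`. -/
def approxBestResponses (U : Matrix R Y ℝ) (ρ : Y → ℝ) (e : ℝ) : Set (R → ℝ) :=
  {μ | μ ∈ stdSimplex ℝ R ∧ ∀ r', ρ ⬝ᵥ U r' - ρ ⬝ᵥ (μ ᵥ* U) ≤ e}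

/-- `α_p(ρ, e)`. -/
noncomputable def worstCaseValue (U V : Matrix R Y ℝ) (ρ : Y → ℝ) (e : ℝ) : ℝ :=
  sInf ((fun μ => ρ ⬝ᵥ (μ ᵥ* V)) '' approxBestResponses U ρ e)

variable {U V : Matrix R Y ℝ} {ρ ρ' : Y → ℝ}

theorem approxBestResponses_mono {e e' : ℝ} (h : e ≤ e') :
    approxBestResponses U ρ e ⊆ approxBestResponses U ρ e' :=
  fun _ hμ => ⟨hμ.1, fun r' => (hμ.2 r').trans h⟩

theorem exists_single_mem_approxBestResponses_zero [Nonempty R] [DecidableEq R] :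
    ∃ r, Pi.single r 1 ∈ approxBestResponses U ρ 0 := by
  obtain ⟨r, -, hr⟩ := exists_max_image univ (fun r => ρ ⬝ᵥ U r) univ_nonempty
  refine ⟨r, single_mem_stdSimplex ℝ r, fun r' => ?_⟩
  rw [single_one_vecMul, sub_nonpos]
  exact hr r' (mem_univ r')

theorem approxBestResponses_nonempty [Nonempty R] {e : ℝ} (he : 0 ≤ e) :
    (approxBestResponses U ρ e).Nonempty := by
  classical
  obtain ⟨r, hr⟩ := exists_single_mem_approxBestResponses_zero (U := U) (ρ := ρ)
  exact ⟨_, approxBestResponses_mono he hr⟩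

theorem dotProduct_vecMul_convexComb (W : Matrix R Y ℝ) (ρ : Y → ℝ) (μ ν : R → ℝ) (t : ℝ) :
    ρ ⬝ᵥ (((1 - t) • μ + t • ν) ᵥ* W) = (1 - t) * ρ ⬝ᵥ (μ ᵥ* W) + t * ρ ⬝ᵥ (ν ᵥ* W) := by
  rw [add_vecMul, smul_vecMul, smul_vecMul, dotProduct_add, dotProduct_smul, dotProduct_smul,
    smul_eq_mul, smul_eq_mul]

theorem convexComb_mem_approxBestResponses {μ ν : R → ℝ} {a b t : ℝ}
    (hμ : μ ∈ approxBestResponses U ρ a) (hν : ν ∈ approxBestResponses U ρ b)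
    (ht₀ : 0 ≤ t) (ht₁ : t ≤ 1) :
    (1 - t) • μ + t • ν ∈ approxBestResponses U ρ ((1 - t) * a + t * b) := by
  refine ⟨convex_stdSimplex ℝ R hμ.1 hν.1 (by linarith) ht₀ (by ring), fun r' => ?_⟩
  rw [dotProduct_vecMul_convexComb]
  linarith [mul_le_mul_of_nonneg_left (hμ.2 r') (sub_nonneg.2 ht₁),
    mul_le_mul_of_nonneg_left (hν.2 r') ht₀]

theorem approxBestResponses_subset_change_prior (hU : ∀ r y, U r y ∈ Set.Icc 0 1) (e : ℝ) :
    approxBestResponses U ρ e ⊆ approxBestResponses U ρ' (e + 2 * ∑ y, |ρ y - ρ' y|) := by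
  intro μ hμ
  refine ⟨hμ.1, fun r' => ?_⟩
  have hr' := abs_dotProduct_sub_dotProduct_le (ρ := ρ) (ρ' := ρ') fun y =>
    abs_le_one_of_mem_Icc (hU r' y)
  have hμU := abs_dotProduct_sub_dotProduct_le (ρ := ρ) (ρ' := ρ') fun y =>
    abs_le_one_of_mem_Icc (vecMul_mem_Icc hU hμ.1 y)
  linarith [hμ.2 r', abs_le.1 hr', abs_le.1 hμU]

theorem worstCaseValue_le (hρ : ρ ∈ stdSimplex ℝ Y) (hV : ∀ r y, V r y ∈ Set.Icc 0 1) {e : ℝ}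
    {μ : R → ℝ} (hμ : μ ∈ approxBestResponses U ρ e) :
    worstCaseValue U V ρ e ≤ ρ ⬝ᵥ (μ ᵥ* V) := by
  refine csInf_le ⟨0, Set.forall_mem_image.2 fun ν hν => ?_⟩ (Set.mem_image_of_mem _ hμ)
  exact (dotProduct_mem_of_mem_stdSimplex (convex_Icc 0 1) hρ (vecMul_mem_Icc hV hν.1)).1

theorem le_worstCaseValue [Nonempty R] {e c : ℝ} (he : 0 ≤ e)
    (h : ∀ μ ∈ approxBestResponses U ρ e, c ≤ ρ ⬝ᵥ (μ ᵥ* V)) : c ≤ worstCaseValue U V ρ e :=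
  le_csInf ((approxBestResponses_nonempty he).image _) (Set.forall_mem_image.2 h)

theorem worstCaseValue_sub_div_le [Nonempty R] (hρ : ρ ∈ stdSimplex ℝ Y)
    (hV : ∀ r y, V r y ∈ Set.Icc 0 1) {ε δ : ℝ} (hε : 0 < ε) (hδ : 0 ≤ δ) :
    worstCaseValue U V ρ ε - δ / ε ≤ worstCaseValue U V ρ (ε + δ) := by
  classical
  obtain ⟨r, hr⟩ := exists_single_mem_approxBestResponses_zero (U := U) (ρ := ρ)
  refine le_worstCaseValue (by positivity) fun μ hμ => ?_
  set t := δ / (ε + δ)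
  have ht₀ : 0 ≤ t := by positivity
  have ht₁ : t ≤ 1 := div_le_one_of_le₀ (by linarith) (by positivity)
  have hmix : (1 - t) • μ + t • Pi.single r 1 ∈ approxBestResponses U ρ ε := by
    have hε_eq : (1 - t) * (ε + δ) + t * 0 = ε := by
      simp only [t]
      field_simp
      ring
    simpa only [hε_eq] using convexComb_mem_approxBestResponses hμ hr ht₀ ht₁
  have hval := worstCaseValue_le hρ hV hmix
  rw [dotProduct_vecMul_convexComb] at hval
  have hμV := dotProduct_mem_of_mem_stdSimplex (convex_Icc 0 1) hρ (vecMul_mem_Icc hV hμ.1)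
  have hrV := dotProduct_mem_of_mem_stdSimplex (convex_Icc 0 1) hρ
    (vecMul_mem_Icc hV (single_mem_stdSimplex ℝ r))
  have htδ : t ≤ δ / ε := div_le_div_of_nonneg_left hδ hε (by linarith)
  linarith [mul_le_mul_of_nonneg_left (by linarith [hμV.1, hrV.2] :
    ρ ⬝ᵥ (Pi.single r 1 ᵥ* V) - ρ ⬝ᵥ (μ ᵥ* V) ≤ 1) ht₀]

end

theorem alpha_prior_misspecification_general
    {Y R : Type*} [Fintype Y] [Fintype R] [Nonempty R]
    (U V : R → Y → ℝ)
    (hU : ∀ r y, U r y ∈ Set.Icc (0:ℝ) 1)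
    (hV : ∀ r y, V r y ∈ Set.Icc (0:ℝ) 1)
    (α : (Y → ℝ) → ℝ → ℝ)
    (hα : ∀ (ρ : Y → ℝ) (e : ℝ), α ρ e = sInf {v : ℝ | ∃ μ : R → ℝ,
        (∀ r, 0 ≤ μ r) ∧ (∑ r, μ r = 1) ∧
        (∀ r' : R, (∑ y, ρ y * U r' y) - (∑ y, ρ y * ∑ r, μ r * U r y) ≤ e) ∧
        v = ∑ y, ρ y * ∑ r, μ r * V r y})
    (π π' : Y → ℝ)
    (hπ'0 : ∀ y, 0 ≤ π' y) (hπ'1 : ∑ y, π' y = 1)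
    (ε : ℝ) (hε : 0 < ε) :
    α π ε ≥ α π' ε - 2 * (∑ y, |π y - π' y|) / ε - ∑ y, |π y - π' y| := by
  have hα_eq : ∀ ρ e, α ρ e = worstCaseValue U V ρ e := by
    intro ρ e
    rw [hα]
    unfold worstCaseValue
    congr 1
    ext v
    simp [approxBestResponses, stdSimplex, dotProduct, vecMul, and_assoc, eq_comm]
  have hπ' : π' ∈ stdSimplex ℝ Y := ⟨hπ'0, hπ'1⟩
  rw [hα_eq, hα_eq, ge_iff_le]
  refine le_worstCaseValue hε.le fun μ hμ => ?_
  have hshift := abs_dotProduct_sub_dotProduct_le (ρ := π) (ρ' := π') fun y =>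
    abs_le_one_of_mem_Icc (vecMul_mem_Icc hV hμ.1 y)
  have hπ'μ := worstCaseValue_le hπ' hV (approxBestResponses_subset_change_prior hU ε hμ)
  have hlip := worstCaseValue_sub_div_le (U := U) hπ' hV hε
    (by positivity : 0 ≤ 2 * ∑ y, |π y - π' y|)
  linarith [abs_le.1 hshift]

/-- robustness of the principal's worst-case utility `α_p` to
misspecification of the prior, in terms of the ℓ¹ distance `d₁(π,π')`. -/
theorem alpha_prior_misspecification
    {Y R : Type*} [Fintype Y] [Fintype R] [Nonempty R]
    (U V : R → Y → ℝ)
    (hU : ∀ r y, U r y ∈ Set.Icc (0:ℝ) 1)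
    (hV : ∀ r y, V r y ∈ Set.Icc (0:ℝ) 1)
    (α : (Y → ℝ) → ℝ → ℝ)
    (hα : ∀ (ρ : Y → ℝ) (e : ℝ), α ρ e = sInf {v : ℝ | ∃ μ : R → ℝ,
        (∀ r, 0 ≤ μ r) ∧ (∑ r, μ r = 1) ∧
        (∀ r' : R, (∑ y, ρ y * U r' y) - (∑ y, ρ y * ∑ r, μ r * U r y) ≤ e) ∧
        v = ∑ y, ρ y * ∑ r, μ r * V r y})
    (π π' : Y → ℝ)
    (hπ0 : ∀ y, 0 ≤ π y) (hπ1 : ∑ y, π y = 1)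
    (hπ'0 : ∀ y, 0 ≤ π' y) (hπ'1 : ∑ y, π' y = 1)
    (ε : ℝ) (hε : 0 < ε) :
    α π ε ≥ α π' ε - 2 * (∑ y, |π y - π' y|) / ε - ∑ y, |π y - π' y| :=
  alpha_prior_misspecification_general U V hU hV α hα π π' hπ'0 hπ'1 ε hε
end

section
/- Let p*(π,ε) be a maximizer over policies p of the worst-case utility α_p(π,ε). Then for any two priors π, π', using the robust policy computed from the wrong prior π' still yields α_{p*(π',ε)}(π,ε) ≥ α_{p*(π,ε)}(π,ε) − 4·d₁(π,π')/ε − 2·d₁(π,π'). -/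
open Finset

/-- the ε-robust policy computed from a misspecified prior `π'`
still performs nearly as well under the true prior `π`. -/
theorem robust_policy_misspecified_prior
    {Y P : Type*} [Fintype Y] [Nonempty P]
    (α : P → (Y → ℝ) → ℝ → ℝ)
    (ε : ℝ) (hε : 0 < ε)
    (pstar : (Y → ℝ) → P)
    (hstar : ∀ (ρ : Y → ℝ) (p : P), α p ρ ε ≤ α (pstar ρ) ρ ε)
    (hmis : ∀ (p : P) (ρ ρ' : Y → ℝ),
      α p ρ ε ≥ α p ρ' ε - 2 * (∑ y, |ρ y - ρ' y|) / ε - ∑ y, |ρ y - ρ' y|)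
    (π π' : Y → ℝ)
    (hπ0 : ∀ y, 0 ≤ π y) (hπ1 : ∑ y, π y = 1)
    (hπ'0 : ∀ y, 0 ≤ π' y) (hπ'1 : ∑ y, π' y = 1) :
    α (pstar π') π ε ≥
      α (pstar π) π ε - 4 * (∑ y, |π y - π' y|) / ε - 2 * ∑ y, |π y - π' y| := by
  have hsymm : (∑ y, |π' y - π y|) = ∑ y, |π y - π' y| := by
    simp [abs_sub_comm]
  have h1 := hmis (pstar π') π π'
  have h2 := hstar π' (pstar π)
  have h3 := hmis (pstar π) π' π
  rw [hsymm] at h3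
  have h4 : (4 * ∑ y, |π y - π' y|) / ε = (2 * ∑ y, |π y - π' y|) / ε + (2 * ∑ y, |π y - π' y|) / ε := by ring
  linarith
end

section
/- In the judge–prosecutor persuasion game with prior probability q of guilt, if the prosecutor commits to the signal that reports 'guilty' with probability 1 when the defendant is guilty and with probability min{1, q/(1−q)} when innocent, then a judge who convicts exactly when her posterior probability of guilt is at least 1/2 will convict with total probability min{1, 2q}; moreover no signaling policy induces a (sequentially rational) conviction probability greater than min{1, 2q}. -/
open Finset

/-- Posterior probability of guilt (state `true`) after message `m`, given prior
`q` and signal policy `p : M → Bool → ℝ` (where `p m s` is the probability of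
message `m` in state `s`). -/
noncomputable def posterior (q : ℝ) {M : Type} (p : M → Bool → ℝ) (m : M) : ℝ :=
  q * p m true / (q * p m true + (1 - q) * p m false)

/-- Total probability of conviction by a judge who convicts exactly when the
posterior probability of guilt is at least 1/2 (ties convict). -/
noncomputable def convictProb (q : ℝ) {M : Type} [Fintype M] (p : M → Bool → ℝ) : ℝ :=
  ∑ m, (q * p m true + (1 - q) * p m false) *
    (if (1 : ℝ) / 2 ≤ posterior q p m then 1 else 0)

/-- in the judge–prosecutor persuasion game with prior `q` of
guilt, the policy that reports "guilty" with probability 1 when guilty and with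
probability `min 1 (q/(1−q))` when innocent attains conviction probability
`min 1 (2q)`, and no policy does better. -/
theorem persuasion_optimal_value (q : ℝ) (hq0 : 0 ≤ q) (hq1 : q ≤ 1) :
    (convictProb q (fun (m : Bool) (s : Bool) =>
        if s then (if m then 1 else 0)
        else (if m then min 1 (q / (1 - q)) else 1 - min 1 (q / (1 - q))))
      = min 1 (2 * q)) ∧
    (∀ (M : Type) [Fintype M] (p : M → Bool → ℝ),
      (∀ m s, 0 ≤ p m s) → (∀ s, ∑ m, p m s = 1) →
      convictProb q p ≤ min 1 (2 * q)) := by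
  constructor
  · -- value of the specific policy
    rcases le_or_gt q (1/2) with hq | hq
    · -- q ≤ 1/2
      have h1q : (0:ℝ) < 1 - q := by linarith
      have hr : min 1 (q / (1 - q)) = q / (1 - q) := by
        apply min_eq_right
        rw [div_le_one h1q]; linarith
      have hmin : min 1 (2*q) = 2*q := min_eq_right (by linarith)
      rcases eq_or_lt_of_le hq0 with h0 | h0
      · -- q = 0
        simp [convictProb, posterior, Fintype.sum_bool, hr, hmin, ← h0]
      · -- 0 < q
        have hden : q * 1 + (1 - q) * (q / (1 - q)) = 2*q := by
          field_simp; ring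
        simp only [convictProb, Fintype.sum_bool, posterior, hr, hmin]
        norm_num
        have hden' : q + (1 - q) * (q / (1 - q)) = 2*q := by
          field_simp; ring
        rw [hden']
        have hpost : (1:ℝ)/2 ≤ q / (2*q) := by
          rw [div_le_div_iff₀ (by norm_num) (by linarith)]
          linarith
        rw [if_pos hpost]
    · -- q > 1/2
      have hmin : min 1 (2*q) = 1 := min_eq_left (by linarith)
      rcases eq_or_lt_of_le hq1 with h1 | h1
      · -- q = 1
        subst h1
        simp [convictProb, posterior, Fintype.sum_bool]
        norm_num
      · -- 1/2 < q < 1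
        have h1q : (0:ℝ) < 1 - q := by linarith
        have hr : min 1 (q / (1 - q)) = 1 := by
          apply min_eq_left
          rw [le_div_iff₀ h1q]; linarith
        simp only [convictProb, Fintype.sum_bool, posterior, hr, hmin]
        norm_num
        linarith
  · intro M _ p hnn hsum
    have hw : ∀ m, (0:ℝ) ≤ q * p m true + (1 - q) * p m false := fun m =>
      add_nonneg (mul_nonneg hq0 (hnn m true)) (mul_nonneg (by linarith) (hnn m false))
    have key : ∀ m ∈ (univ : Finset M), (q * p m true + (1 - q) * p m false) *
        (if (1:ℝ)/2 ≤ posterior q p m then 1 else 0) ≤ 2 * q * p m true := by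
      intro m _
      have hnn' : (0:ℝ) ≤ 2 * q * p m true := mul_nonneg (by linarith) (hnn m true)
      split_ifs with h
      · rw [mul_one]
        rcases eq_or_lt_of_le (hw m) with h0 | h0
        · rw [← h0]; exact hnn'
        · unfold posterior at h
          rw [div_le_div_iff₀ (by norm_num) h0] at h
          linarith
      · rw [mul_zero]; exact hnn'
    have h2 : convictProb q p ≤ 2 * q := by
      calc convictProb q p ≤ ∑ m, 2 * q * p m true := sum_le_sum key
        _ = 2 * q := by rw [← mul_sum, hsum true, mul_one]
    have h1 : convictProb q p ≤ 1 := by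
      have step : ∀ m ∈ (univ : Finset M), (q * p m true + (1 - q) * p m false) *
          (if (1:ℝ)/2 ≤ posterior q p m then 1 else 0)
          ≤ q * p m true + (1 - q) * p m false := by
        intro m _
        split_ifs
        · rw [mul_one]
        · rw [mul_zero]; exact hw m
      calc convictProb q p ≤ ∑ m, (q * p m true + (1 - q) * p m false) :=
            sum_le_sum step
        _ = q * (∑ m, p m true) + (1 - q) * (∑ m, p m false) := by
            rw [sum_add_distrib, ← mul_sum, ← mul_sum]
        _ = 1 := by rw [hsum true, hsum false]; ring
    exact le_min h1 h2
end

section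
/- (Weighted calibration aggregation) Suppose per-context scoring regret bound κ ≥ (1/T)·Σ_F n_F · π̂_F · (S(π̂_F) − S(π_F)) holds with the quadratic scoring rule (ξ = 2). Then the average ℓ¹ miscalibration satisfies (1/T)·Σ_F n_F · d₁(π_F, π̂_F) ≤ √(|Y|·κ). -/
open Finset

lemma quad_regret_eq {Y : Type*} [Fintype Y] (p q : Y → ℝ) (hq : ∑ y, q y = 1) :
    ∑ y, q y * ((2 * q y - ∑ y', (q y') ^ 2) - (2 * p y - ∑ y', (p y') ^ 2))
      = ∑ y, (p y - q y) ^ 2 := by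
  have key : ∀ y, q y * ((2 * q y - ∑ y', (q y') ^ 2) - (2 * p y - ∑ y', (p y') ^ 2))
      = (q y ^ 2 - p y ^ 2) + ((∑ y', (p y') ^ 2) - ∑ y', (q y') ^ 2) * q y
        + (p y - q y) ^ 2 := by intro y; ring
  simp only [key]
  rw [Finset.sum_add_distrib, Finset.sum_add_distrib, Finset.sum_sub_distrib,
    ← Finset.mul_sum, hq]
  ring

theorem quadratic_calibration_aggregation
    {Y F : Type*} [Fintype Y] [Nonempty Y] [Fintype F]
    (T : ℕ) (hT : 0 < T)
    (n : F → ℕ) (hsum : ∑ f, n f = T)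
    (πF πhat : F → Y → ℝ)
    (hπF0 : ∀ f y, 0 ≤ πF f y) (hπF1 : ∀ f, ∑ y, πF f y = 1)
    (hπhat0 : ∀ f y, 0 ≤ πhat f y) (hπhat1 : ∀ f, ∑ y, πhat f y = 1)
    (κ : ℝ)
    (hκ : (1 / (T : ℝ)) * ∑ f, (n f : ℝ) * ∑ y, πhat f y *
        ((2 * πhat f y - ∑ y', (πhat f y') ^ 2)
          - (2 * πF f y - ∑ y', (πF f y') ^ 2)) ≤ κ) :
    (1 / (T : ℝ)) * ∑ f, (n f : ℝ) * (∑ y, |πF f y - πhat f y|) ≤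
      Real.sqrt ((Fintype.card Y : ℝ) * κ) := by
  have hT' : (0:ℝ) < T := by exact_mod_cast hT
  set w : F → ℝ := fun f => (n f : ℝ) / T with hw
  have hw0 : ∀ f, 0 ≤ w f := fun f => by positivity
  have hw1 : ∑ f, w f = 1 := by
    rw [← Finset.sum_div]
    rw [show ∑ f, (n f : ℝ) = T by exact_mod_cast hsum]
    field_simp
  set d : F → ℝ := fun f => ∑ y, |πF f y - πhat f y| with hd
  set e : F → ℝ := fun f => ∑ y, (πF f y - πhat f y) ^ 2 with he
  have hd0 : ∀ f, 0 ≤ d f := fun f => Finset.sum_nonneg fun y _ => abs_nonneg _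
  have he0 : ∀ f, 0 ≤ e f := fun f => Finset.sum_nonneg fun y _ => sq_nonneg _
  -- regret = e
  have hreg : ∑ f, w f * e f ≤ κ := by
    calc ∑ f, w f * e f = (1 / (T : ℝ)) * ∑ f, (n f : ℝ) * ∑ y, πhat f y *
        ((2 * πhat f y - ∑ y', (πhat f y') ^ 2)
          - (2 * πF f y - ∑ y', (πF f y') ^ 2)) := by
          rw [Finset.mul_sum]
          refine Finset.sum_congr rfl fun f _ => ?_
          rw [quad_regret_eq _ _ (hπhat1 f)]
          simp [hw, he]; ring
      _ ≤ κ := hκ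
  have hκ0 : 0 ≤ κ := le_trans (Finset.sum_nonneg fun f _ => mul_nonneg (hw0 f) (he0 f)) hreg
  -- d f ^ 2 ≤ |Y| * e f
  have hde : ∀ f, d f ^ 2 ≤ (Fintype.card Y : ℝ) * e f := by
    intro f
    have := sq_sum_le_card_mul_sum_sq (s := Finset.univ)
      (f := fun y => |πF f y - πhat f y|)
    simpa [hd, he, sq_abs, Finset.card_univ] using this
  -- weighted Cauchy-Schwarz
  have hcs : (∑ f, w f * d f) ^ 2 ≤ ∑ f, w f * d f ^ 2 := by
    have := Finset.sum_mul_sq_le_sq_mul_sq Finset.univ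
      (fun f => Real.sqrt (w f)) (fun f => Real.sqrt (w f) * d f)
    have h1 : ∀ f, Real.sqrt (w f) * (Real.sqrt (w f) * d f) = w f * d f := by
      intro f
      rw [← mul_assoc, Real.mul_self_sqrt (hw0 f)]
    have h2 : ∀ f, Real.sqrt (w f) ^ 2 = w f := fun f => Real.sq_sqrt (hw0 f)
    have h3 : ∀ f, (Real.sqrt (w f) * d f) ^ 2 = w f * d f ^ 2 := by
      intro f; rw [mul_pow, h2]
    simp only [h1, h2, h3, hw1, one_mul] at this
    exact this
  have hmain : (∑ f, w f * d f) ^ 2 ≤ (Fintype.card Y : ℝ) * κ := by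
    calc (∑ f, w f * d f) ^ 2 ≤ ∑ f, w f * d f ^ 2 := hcs
      _ ≤ ∑ f, w f * ((Fintype.card Y : ℝ) * e f) :=
          Finset.sum_le_sum fun f _ => mul_le_mul_of_nonneg_left (hde f) (hw0 f)
      _ = (Fintype.card Y : ℝ) * ∑ f, w f * e f := by
          rw [Finset.mul_sum]; exact Finset.sum_congr rfl fun f _ => by ring
      _ ≤ (Fintype.card Y : ℝ) * κ := by
          exact mul_le_mul_of_nonneg_left hreg (by positivity)
  have hLHS : (1 / (T : ℝ)) * ∑ f, (n f : ℝ) * d f = ∑ f, w f * d f := by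
    rw [Finset.mul_sum]
    exact Finset.sum_congr rfl fun f _ => by simp [hw]; ring
  rw [hLHS]
  have h0 : 0 ≤ ∑ f, w f * d f :=
    Finset.sum_nonneg fun f _ => mul_nonneg (hw0 f) (hd0 f)
  exact (Real.le_sqrt h0 (by positivity)).mpr hmain
end
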